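/- arXiv:2210.08678 — 4 statements merged into one kernel-verified Lean document; each statement's English description precedes it below -/
import Mathlib

section
/- Let A be a positive definite n×n matrix. Then for every n×n complex matrix Y, Re(Y A⁻¹ Y) ≤ (Re Y) A⁻¹ (Re Y) in the Loewner order. -/
/-! Split `Y = H + S` with `H = Re Y` Hermitian and `S = (Y - Yᴴ)/2` skew-Hermitian. For Hermitian
`B` the cross terms `HBS + SBH` are skew-Hermitian and drop out of `Re (Y B Y)`, leaving
`Re Y · B · Re Y - Re (Y B Y) = -S B S = Sᴴ B S`, a congruence of `B = A⁻¹ > 0`. -/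

open Matrix
open scoped ComplexOrder

/-- The real part `Re X = (X + X*) / 2` of a matrix. -/
noncomputable def reM {n : ℕ} (X : Matrix (Fin n) (Fin n) ℂ) : Matrix (Fin n) (Fin n) ℂ :=
  (1 / 2 : ℂ) • (X + Xᴴ)

theorem reM_mul_mul_reM_sub_reM {n : ℕ} {B : Matrix (Fin n) (Fin n) ℂ} (hB : B.IsHermitian)
    (Y : Matrix (Fin n) (Fin n) ℂ) :
    reM Y * B * reM Y - reM (Y * B * Y) =
      ((1 / 2 : ℂ) • (Y - Yᴴ))ᴴ * B * ((1 / 2 : ℂ) • (Y - Yᴴ)) := by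
  have h2 : star (1 / 2 : ℂ) = 1 / 2 := by simp
  simp only [reM, conjTranspose_smul, conjTranspose_sub, conjTranspose_mul,
    conjTranspose_conjTranspose, hB.eq, h2, smul_mul_assoc, mul_smul_comm, smul_smul]
  simp only [Matrix.mul_add, Matrix.add_mul, Matrix.mul_sub, Matrix.sub_mul, ← mul_assoc]
  module

theorem re_YAinvY_le {n : ℕ} (A : Matrix (Fin n) (Fin n) ℂ) (hA : A.PosDef)
    (Y : Matrix (Fin n) (Fin n) ℂ) :
    (reM Y * A⁻¹ * reM Y - reM (Y * A⁻¹ * Y)).PosSemidef := by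
  rw [reM_mul_mul_reM_sub_reM hA.inv.isHermitian]
  exact hA.inv.posSemidef.conjTranspose_mul_mul_same _
end

section
/- Let T be a positive semidefinite n×n matrix. Then for all vectors x, y ∈ ℂ^n, |⟨Tx, y⟩| ≤ (‖T‖/2)(|⟨x, y⟩| + ‖x‖‖y‖), where ‖T‖ is the operator norm. -/
open Matrix
open scoped ComplexOrder

set_option maxHeartbeats 1000000
set_option synthInstance.maxHeartbeats 2000000

theorem psd_inner_ineq {n : ℕ} (T : Matrix (Fin n) (Fin n) ℂ) (hT : T.PosSemidef)
    (x y : EuclideanSpace ℂ (Fin n)) :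
    ‖(inner ℂ ((Matrix.toEuclideanCLM (𝕜 := ℂ) T) x) y : ℂ)‖ ≤
      ‖Matrix.toEuclideanCLM (𝕜 := ℂ) T‖ / 2 * (‖(inner ℂ x y : ℂ)‖ + ‖x‖ * ‖y‖) := by
  set a := Matrix.toEuclideanCLM (𝕜 := ℂ) T with ha
  set M := ‖a‖ with hM
  have hM0 : (0:ℝ) ≤ M := norm_nonneg _
  have hsa : _root_.IsSelfAdjoint a := by
    rw [ha, _root_.IsSelfAdjoint, ← map_star]
    exact congrArg _ hT.1
  have hpos : a.IsPositive := by
    refine ⟨ContinuousLinearMap.isSelfAdjoint_iff_isSymmetric.mp hsa, fun z => ?_⟩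
    rw [ContinuousLinearMap.reApplyInnerSelf_apply, inner_re_symm]
    have h := hT.dotProduct_mulVec_nonneg ((WithLp.equiv 2 (Fin n → ℂ)) z)
    have hinner : (inner ℂ z (a z) : ℂ)
        = dotProduct (star ((WithLp.equiv 2 (Fin n → ℂ)) z)) (T *ᵥ ((WithLp.equiv 2 (Fin n → ℂ)) z)) := by
      rw [EuclideanSpace.inner_eq_star_dotProduct]
      rw [dotProduct_comm]; rfl
    rw [hinner]
    exact (Complex.le_def.mp h).1
  have h0a : (0 : EuclideanSpace ℂ (Fin n) →L[ℂ] EuclideanSpace ℂ (Fin n)) ≤ a :=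
    (ContinuousLinearMap.nonneg_iff_isPositive a).mpr hpos
  set b := a - algebraMap ℝ (EuclideanSpace ℂ (Fin n) →L[ℂ] EuclideanSpace ℂ (Fin n)) (M/2)
    with hb
  have halg_sa : _root_.IsSelfAdjoint
      (algebraMap ℝ (EuclideanSpace ℂ (Fin n) →L[ℂ] EuclideanSpace ℂ (Fin n)) (M/2)) :=
by
    rw [IsScalarTower.algebraMap_apply ℝ ℂ
      (EuclideanSpace ℂ (Fin n) →L[ℂ] EuclideanSpace ℂ (Fin n)) (M/2)]
    exact _root_.IsSelfAdjoint.algebraMap _ (Complex.conj_ofReal _)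
  have hbsa : _root_.IsSelfAdjoint b := by
    have h1 : ContinuousLinearMap.adjoint a = a :=
      ContinuousLinearMap.isSelfAdjoint_iff'.mp hsa
    have h2 : ContinuousLinearMap.adjoint
        ((algebraMap ℝ (EuclideanSpace ℂ (Fin n) →L[ℂ] EuclideanSpace ℂ (Fin n))) (M / 2)) =
        (algebraMap ℝ (EuclideanSpace ℂ (Fin n) →L[ℂ] EuclideanSpace ℂ (Fin n))) (M / 2) :=
      ContinuousLinearMap.isSelfAdjoint_iff'.mp halg_sa
    rw [_root_.IsSelfAdjoint, hb, ContinuousLinearMap.star_eq_adjoint, map_sub, h1, h2]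
  have hb_ub : b ≤ algebraMap ℝ _ (M/2) := by
    have h1 : a ≤ algebraMap ℝ _ M := hsa.le_algebraMap_norm_self
    have h2 := sub_le_sub_right h1
      (algebraMap ℝ (EuclideanSpace ℂ (Fin n) →L[ℂ] EuclideanSpace ℂ (Fin n)) (M/2))
    rw [← map_sub] at h2
    have : M - M/2 = M/2 := by ring
    rwa [this] at h2
  have hb_lb : algebraMap ℝ _ (-(M/2)) ≤ b := by
    have h2 := sub_le_sub_right h0a
      (algebraMap ℝ (EuclideanSpace ℂ (Fin n) →L[ℂ] EuclideanSpace ℂ (Fin n)) (M/2))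
    rw [zero_sub, ← map_neg] at h2
    exact h2
  have hbnorm : ‖b‖ ≤ M/2 := by
    rcases subsingleton_or_nontrivial
        (EuclideanSpace ℂ (Fin n) →L[ℂ] EuclideanSpace ℂ (Fin n)) with hs | hn
    · rw [Subsingleton.elim b 0, norm_zero]
      positivity
    · rcases CStarAlgebra.norm_or_neg_norm_mem_spectrum hbsa with h | h
      · exact (le_algebraMap_iff_spectrum_le hbsa).mp hb_ub _ h
      · have := (algebraMap_le_iff_le_spectrum hbsa).mp hb_lb _ h
        linarith
  have hbx : b x = a x - ((M/2 : ℝ) : ℂ) • x := by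
    rw [hb, ContinuousLinearMap.sub_apply, Algebra.algebraMap_eq_smul_one,
      ContinuousLinearMap.smul_apply, ContinuousLinearMap.one_apply, Complex.coe_smul]
  have hax : a x = b x + ((M/2 : ℝ) : ℂ) • x := by
    rw [hbx, sub_add_cancel]
  have key : (inner ℂ (a x) y : ℂ) = inner ℂ (b x) y + ((M/2 : ℝ) : ℂ) * inner ℂ x y := by
    rw [hax, inner_add_left, inner_smul_left, Complex.conj_ofReal]
  have h1 : ‖(inner ℂ (b x) y : ℂ)‖ ≤ M/2 * (‖x‖ * ‖y‖) := by
    calc ‖(inner ℂ (b x) y : ℂ)‖ ≤ ‖b x‖ * ‖y‖ := norm_inner_le_norm _ _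
    _ ≤ (‖b‖ * ‖x‖) * ‖y‖ :=
        mul_le_mul_of_nonneg_right (b.le_opNorm x) (norm_nonneg y)
    _ ≤ (M/2 * ‖x‖) * ‖y‖ := by
        have := mul_le_mul_of_nonneg_right hbnorm (norm_nonneg x)
        exact mul_le_mul_of_nonneg_right this (norm_nonneg y)
    _ = M/2 * (‖x‖ * ‖y‖) := by ring
  calc ‖(inner ℂ (a x) y : ℂ)‖
      ≤ ‖(inner ℂ (b x) y : ℂ)‖ + ‖((M/2 : ℝ) : ℂ) * (inner ℂ x y : ℂ)‖ := by
        rw [key]; exact norm_add_le _ _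
    _ = ‖(inner ℂ (b x) y : ℂ)‖ + M/2 * ‖(inner ℂ x y : ℂ)‖ := by
        rw [norm_mul, Complex.norm_real, Real.norm_of_nonneg (by positivity)]
    _ ≤ M/2 * (‖x‖ * ‖y‖) + M/2 * ‖(inner ℂ x y : ℂ)‖ := by linarith
    _ = M / 2 * (‖(inner ℂ x y : ℂ)‖ + ‖x‖ * ‖y‖) := by ring
end

section
/- Let A = U|A| be the polar decomposition of an n×n complex matrix A with U unitary. Then for all vectors x, y ∈ ℂ^n, |⟨Ax, y⟩| ≤ (‖A‖/2)(|⟨x, U* y⟩| + ‖U* y‖ ‖x‖). -/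
open Matrix
open scoped ComplexOrder

set_option maxHeartbeats 2000000

/-- The square root of a positive semidefinite matrix, as defined in the older Mathlib
(`Matrix.PosSemidef.sqrt`, removed since). -/
noncomputable def Matrix.PosSemidef.sqrt {𝕜 : Type*} [RCLike 𝕜] {n : Type*} [Fintype n]
    [DecidableEq n] {A : Matrix n n 𝕜} (hA : A.PosSemidef) : Matrix n n 𝕜 :=
  hA.1.eigenvectorUnitary.1 * diagonal ((↑) ∘ (√·) ∘ hA.1.eigenvalues) *
  (star hA.1.eigenvectorUnitary : Matrix n n 𝕜)

theorem Matrix.PosSemidef.posSemidef_sqrt {𝕜 : Type*} [RCLike 𝕜] {n : Type*} [Fintype n]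
    [DecidableEq n] {A : Matrix n n 𝕜} (hA : A.PosSemidef) : hA.sqrt.PosSemidef := by
  unfold Matrix.PosSemidef.sqrt
  have hD : (diagonal ((↑) ∘ (√·) ∘ hA.1.eigenvalues : n → 𝕜)).PosSemidef := by
    refine Matrix.PosSemidef.diagonal (fun i => ?_)
    simp only [Pi.zero_apply, Function.comp_apply]
    exact RCLike.ofReal_nonneg.mpr (Real.sqrt_nonneg _)
  have := hD.mul_mul_conjTranspose_same (hA.1.eigenvectorUnitary.1)
  simpa [Matrix.star_eq_conjTranspose] using this

theorem Matrix.PosSemidef.sqrt_mul_self {𝕜 : Type*} [RCLike 𝕜] {n : Type*} [Fintype n]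
    [DecidableEq n] {A : Matrix n n 𝕜} (hA : A.PosSemidef) : hA.sqrt * hA.sqrt = A := by
  unfold Matrix.PosSemidef.sqrt
  conv_rhs => rw [hA.1.spectral_theorem, Unitary.conjStarAlgAut_apply]
  have hV : (star hA.1.eigenvectorUnitary : Matrix n n 𝕜) * hA.1.eigenvectorUnitary.1 = 1 :=
    Unitary.coe_star_mul_self _
  have hDD : diagonal ((↑) ∘ (√·) ∘ hA.1.eigenvalues : n → 𝕜) *
      diagonal ((↑) ∘ (√·) ∘ hA.1.eigenvalues : n → 𝕜) =
      diagonal (RCLike.ofReal ∘ hA.1.eigenvalues) := by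
    rw [diagonal_mul_diagonal]
    congr 1
    funext i
    simp only [Function.comp_apply]
    rw [← RCLike.ofReal_mul, Real.mul_self_sqrt (hA.eigenvalues_nonneg i)]
  calc _ = (hA.1.eigenvectorUnitary.1 * diagonal ((↑) ∘ (√·) ∘ hA.1.eigenvalues : n → 𝕜)) *
        ((star hA.1.eigenvectorUnitary : Matrix n n 𝕜) * hA.1.eigenvectorUnitary.1) *
        (diagonal ((↑) ∘ (√·) ∘ hA.1.eigenvalues : n → 𝕜) *
        (star hA.1.eigenvectorUnitary : Matrix n n 𝕜)) := by simp only [Matrix.mul_assoc]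
    _ = _ := by rw [hV, Matrix.mul_one, Matrix.mul_assoc, ← Matrix.mul_assoc _ _ (star _ : Matrix n n 𝕜), hDD,
        ← Matrix.mul_assoc]

theorem polar_inner_ineq {n : ℕ} (A U : Matrix (Fin n) (Fin n) ℂ)
    (hU : U ∈ Matrix.unitaryGroup (Fin n) ℂ)
    (hpolar : A = U * (Matrix.posSemidef_conjTranspose_mul_self A).sqrt)
    (x y : EuclideanSpace ℂ (Fin n)) :
    ‖(inner ℂ ((Matrix.toEuclideanCLM (𝕜 := ℂ) A) x) y : ℂ)‖ ≤
      ‖Matrix.toEuclideanCLM (𝕜 := ℂ) A‖ / 2 *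
        (‖(inner ℂ x ((Matrix.toEuclideanCLM (𝕜 := ℂ) Uᴴ) y) : ℂ)‖ +
          ‖(Matrix.toEuclideanCLM (𝕜 := ℂ) Uᴴ) y‖ * ‖x‖) := by
  set φ := Matrix.toEuclideanCLM (𝕜 := ℂ) (n := Fin n) with hφ
  set P := (Matrix.posSemidef_conjTranspose_mul_self A).sqrt with hPdef
  have hP : P.PosSemidef := (Matrix.posSemidef_conjTranspose_mul_self A).posSemidef_sqrt
  set Q := hP.sqrt with hQdef
  have hQP : Q * Q = P := hP.sqrt_mul_self
  have hQherm : Qᴴ = Q := hP.posSemidef_sqrt.1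
  have hPherm : Pᴴ = P := hP.1
  set f := φ A with hfdef
  set u := φ U with hudef
  set p := φ P with hpdef2
  set q := φ Q with hqdef2
  set z := φ Uᴴ y with hzdef
  -- star facts
  have hstaru : star u = φ Uᴴ := by
    rw [hudef, ← map_star, Matrix.star_eq_conjTranspose]
  have hPs : star P = P := by rw [Matrix.star_eq_conjTranspose, hPherm]
  have hQs : star Q = Q := by rw [Matrix.star_eq_conjTranspose, hQherm]
  have hstarp : star p = p := by rw [hpdef2, ← map_star, hPs]
  have hstarq : star q = q := by rw [hqdef2, ← map_star, hQs]
  have hqq : q * q = p := by rw [hqdef2, hpdef2, ← _root_.map_mul, hQP]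
  have hfup : f = u * p := by rw [hfdef, hpolar, _root_.map_mul]
  have huu' : u * star u = 1 := by
    rw [hudef, ← map_star, ← _root_.map_mul]
    rw [(Matrix.mem_unitaryGroup_iff).mp hU]
    exact map_one φ
  have huu : star u * u = 1 := by
    rw [hudef, ← map_star, ← _root_.map_mul]
    rw [(Matrix.mem_unitaryGroup_iff').mp hU]
    exact map_one φ
  set c := ‖f‖ with hcdef
  have hc0 : 0 ≤ c := norm_nonneg f
  -- ‖star u‖ ≤ 1
  have hsu : ‖star u‖ ≤ 1 := by
    have h1 : ‖star u‖ * ‖star u‖ = ‖u * star u‖ := by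
      rw [← CStarRing.norm_star_mul_self, star_star]
    rw [huu'] at h1
    have h2 : ‖(1 : EuclideanSpace ℂ (Fin n) →L[ℂ] EuclideanSpace ℂ (Fin n))‖ ≤ 1 := by
      rw [ContinuousLinearMap.one_def]; exact ContinuousLinearMap.norm_id_le
    nlinarith [norm_nonneg (star u)]
  have hpc : ‖p‖ ≤ c := by
    have h1 : p = star u * f := by
      rw [hfup, ← mul_assoc, huu, one_mul]
    calc ‖p‖ = ‖star u * f‖ := by rw [h1]
      _ ≤ ‖star u‖ * ‖f‖ := norm_mul_le _ _
      _ ≤ 1 * ‖f‖ := by gcongr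
      _ = c := one_mul _
  -- adjoint moves
  have hself : ∀ (T : EuclideanSpace ℂ (Fin n) →L[ℂ] EuclideanSpace ℂ (Fin n)),
      star T = T → ∀ a b : EuclideanSpace ℂ (Fin n),
      (inner ℂ (T a) b : ℂ) = inner ℂ a (T b) := by
    intro T hT a b
    conv_rhs => rw [← hT, ContinuousLinearMap.star_eq_adjoint,
      ContinuousLinearMap.adjoint_inner_right]
  -- step A : ⟨f x, y⟩ = ⟨p x, z⟩
  have hA : (inner ℂ (f x) y : ℂ) = inner ℂ (p x) z := by
    rw [hfup, ContinuousLinearMap.mul_apply]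
    rw [hzdef, ← hstaru, ContinuousLinearMap.star_eq_adjoint,
      ContinuousLinearMap.adjoint_inner_right]
  clear_value f u p q z c
  set r := ((inner ℂ (p x) x : ℂ)).re with hrdef
  clear_value r
  have hr : r = ‖q x‖ ^ 2 := by
    have e : (inner ℂ (p x) x : ℂ) = inner ℂ (q x) (q x) := by
      rw [← hqq, ContinuousLinearMap.mul_apply]
      exact hself q hstarq (q x) x
    rw [hrdef, e, ← RCLike.re_to_complex]
    exact inner_self_eq_norm_sq (q x)
  have hr0 : 0 ≤ r := by rw [hr]; positivity
  have hpx : ‖p x‖ ^ 2 ≤ c * r := by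
    have h1 : ‖p x‖ ≤ ‖q‖ * ‖q x‖ := by
      rw [← hqq, ContinuousLinearMap.mul_apply]
      exact q.le_opNorm (q x)
    have h2 : ‖q‖ * ‖q‖ = ‖p‖ := by
      rw [← hqq, ← CStarRing.norm_star_mul_self, hstarq]
    have h3 : ‖p‖ ≤ c := hpc
    have := norm_nonneg (q x)
    have := norm_nonneg (p x)
    have := norm_nonneg q
    nlinarith [hr]
  -- the vector w
  set w := (2 : ℂ) • (p x) - (c : ℂ) • x with hwdef
  clear_value w
  have hwx : ‖w‖ ≤ c * ‖x‖ := by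
    have hre : RCLike.re (inner ℂ ((2 : ℂ) • p x) ((c : ℂ) • x) : ℂ) = 2 * (c * r) := by
      rw [inner_smul_left, inner_smul_right, ← mul_assoc]
      have e0 : (starRingEnd ℂ) 2 * (c : ℂ) = ((2 * c : ℝ) : ℂ) := by
        rw [map_ofNat]; push_cast; ring
      rw [e0, RCLike.re_to_complex, Complex.re_ofReal_mul, hrdef]
      ring
    have hexp : ‖w‖ ^ 2 = 4 * ‖p x‖ ^ 2 - 4 * (c * r) + (c * ‖x‖) ^ 2 := by
      rw [hwdef, norm_sub_sq (𝕜 := ℂ), hre, norm_smul, norm_smul]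
      have e1 : ‖(2 : ℂ)‖ = 2 := by norm_num
      have e2 : ‖(c : ℂ)‖ = c := by rw [Complex.norm_real, Real.norm_of_nonneg hc0]
      rw [e1, e2]
      ring
    have hsq : ‖w‖ ^ 2 ≤ (c * ‖x‖) ^ 2 := by rw [hexp]; linarith [hpx]
    have h0 := norm_nonneg w
    nlinarith [mul_nonneg hc0 (norm_nonneg x)]
  -- assemble
  have hwz : (inner ℂ w z : ℂ) = 2 * inner ℂ (p x) z - (c : ℂ) * inner ℂ x z := by
    rw [hwdef, inner_sub_left, inner_smul_left, inner_smul_left, Complex.conj_ofReal,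
      map_ofNat]
  have key : 2 * ‖(inner ℂ (p x) z : ℂ)‖ ≤ c * ‖(inner ℂ x z : ℂ)‖ + (c * ‖x‖) * ‖z‖ := by
    have h1 : (2 : ℂ) * inner ℂ (p x) z = (c : ℂ) * inner ℂ x z + inner ℂ w z := by rw [hwz]; ring
    have h2 : ‖(2 : ℂ) * (inner ℂ (p x) z : ℂ)‖ = 2 * ‖(inner ℂ (p x) z : ℂ)‖ := by
      rw [norm_mul]; norm_num
    have h3 : ‖(c : ℂ) * (inner ℂ x z : ℂ)‖ = c * ‖(inner ℂ x z : ℂ)‖ := by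
      rw [norm_mul, Complex.norm_real, Real.norm_of_nonneg hc0]
    have h4 : ‖(inner ℂ w z : ℂ)‖ ≤ (c * ‖x‖) * ‖z‖ :=
      le_trans (norm_inner_le_norm w z) (by gcongr)
    calc 2 * ‖(inner ℂ (p x) z : ℂ)‖ = ‖(2 : ℂ) * (inner ℂ (p x) z : ℂ)‖ := h2.symm
      _ = ‖(c : ℂ) * (inner ℂ x z : ℂ) + (inner ℂ w z : ℂ)‖ := by rw [h1]
      _ ≤ ‖(c : ℂ) * (inner ℂ x z : ℂ)‖ + ‖(inner ℂ w z : ℂ)‖ := norm_add_le _ _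
      _ ≤ c * ‖(inner ℂ x z : ℂ)‖ + (c * ‖x‖) * ‖z‖ := by rw [h3]; gcongr
  rw [hA]
  rw [div_mul_eq_mul_div, le_div_iff₀ (by norm_num : (0:ℝ) < 2)]
  calc ‖(inner ℂ (p x) z : ℂ)‖ * 2 = 2 * ‖(inner ℂ (p x) z : ℂ)‖ := by ring
    _ ≤ c * ‖(inner ℂ x z : ℂ)‖ + (c * ‖x‖) * ‖z‖ := key
    _ = c * (‖(inner ℂ x z : ℂ)‖ + ‖z‖ * ‖x‖) := by ring
end

section
/- Let T ∈ M_n(ℂ) have numerical range in the sector S_α. Then there exists a unitary U with ‖T‖ ≤ sec(α) · r(U · Re T), where r denotes the spectral radius and ‖·‖ the operator norm. In particular ‖T‖ ≤ sec(α) ‖Re T‖. -/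
open Matrix
open scoped ComplexOrder

/-- The open sector `S_α`. -/
def sector (α : ℝ) : Set ℂ := {z : ℂ | 0 < z.re ∧ |z.im| ≤ Real.tan α * z.re}

/-- `A ∈ Π_n^α`: the numerical range of `A` lies in the sector `S_α`. -/
def IsSectorial {n : ℕ} (α : ℝ) (A : Matrix (Fin n) (Fin n) ℂ) : Prop :=
  ∀ x : Fin n → ℂ, star x ⬝ᵥ x = 1 → star x ⬝ᵥ A.mulVec x ∈ sector α

section AuxSelfAdj

open scoped ComplexOrder InnerProductSpace

variable {E : Type*} [NormedAddCommGroup E] [InnerProductSpace ℂ E] [CompleteSpace E]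

local notation "⟪" x ", " y "⟫" => @inner ℂ _ _ x y

/-- A self-adjoint operator whose numerical range is bounded by `c` has norm bound `c`. -/
lemma selfadj_apply_norm_le (a : E →L[ℂ] E) (ha : star a = a) {c : ℝ} (hc : 0 ≤ c)
    (h : ∀ x : E, |(⟪x, a x⟫).re| ≤ c * ‖x‖ ^ 2) (y : E) : ‖a y‖ ≤ c * ‖y‖ := by
  rcases eq_or_ne (a y) 0 with hay | hay
  · rw [hay, norm_zero]; positivity
  have hy : y ≠ 0 := by rintro rfl; simp at hay
  set r : ℝ := ‖y‖ / ‖a y‖ with hr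
  set x : E := (r : ℂ) • a y with hx
  have hsym : ∀ u v : E, ⟪v, a u⟫ = starRingEnd ℂ ⟪u, a v⟫ := by
    intro u v
    calc ⟪v, a u⟫ = ⟪(star a) v, u⟫ := by
          rw [ContinuousLinearMap.star_eq_adjoint, ContinuousLinearMap.adjoint_inner_left]
      _ = ⟪a v, u⟫ := by rw [ha]
      _ = starRingEnd ℂ ⟪u, a v⟫ := by rw [← inner_conj_symm]
  have hpol : 4 * (⟪x, a y⟫).re = (⟪x + y, a (x + y)⟫).re - (⟪x - y, a (x - y)⟫).re := by
    have e1 : ⟪x + y, a (x + y)⟫ = ⟪x, a x⟫ + ⟪x, a y⟫ + ⟪y, a x⟫ + ⟪y, a y⟫ := by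
      simp [map_add, inner_add_left, inner_add_right]; ring
    have e2 : ⟪x - y, a (x - y)⟫ = ⟪x, a x⟫ - ⟪x, a y⟫ - ⟪y, a x⟫ + ⟪y, a y⟫ := by
      simp [map_sub, inner_sub_left, inner_sub_right]; ring
    have hre : (⟪y, a x⟫).re = (⟪x, a y⟫).re := by rw [hsym x y]; exact Complex.conj_re _
    rw [e1, e2]
    simp only [Complex.add_re, Complex.sub_re, hre]
    ring
  have hpar : ‖x + y‖ ^ 2 + ‖x - y‖ ^ 2 = 2 * (‖x‖ ^ 2 + ‖y‖ ^ 2) := by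
    simpa [pow_two] using parallelogram_law_with_norm ℂ x y
  have hxnorm : ‖x‖ = ‖y‖ := by
    rw [hx, norm_smul]
    simp [Complex.norm_real, hr, abs_of_nonneg (div_nonneg (norm_nonneg y) (norm_nonneg _)),
      div_mul_cancel₀ _ (norm_ne_zero_iff.mpr hay)]
  have hineq : 4 * (⟪x, a y⟫).re ≤ 4 * (c * ‖y‖ ^ 2) := by
    rw [hpol]
    have h1 := h (x + y)
    have h2 := h (x - y)
    have : (⟪x + y, a (x + y)⟫).re - (⟪x - y, a (x - y)⟫).re
        ≤ c * ‖x + y‖ ^ 2 + c * ‖x - y‖ ^ 2 := by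
      have := abs_le.mp h1
      have := abs_le.mp h2
      nlinarith [abs_le.mp h1, abs_le.mp h2]
    calc _ ≤ c * ‖x + y‖ ^ 2 + c * ‖x - y‖ ^ 2 := this
      _ = c * (‖x + y‖ ^ 2 + ‖x - y‖ ^ 2) := by ring
      _ = c * (2 * (‖x‖ ^ 2 + ‖y‖ ^ 2)) := by rw [hpar]
      _ = 4 * (c * ‖y‖ ^ 2) := by rw [hxnorm]; ring
  have hval : (⟪x, a y⟫).re = ‖y‖ * ‖a y‖ := by
    have hinner : ⟪a y, a y⟫ = ((‖a y‖ ^ 2 : ℝ) : ℂ) := by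
      exact_mod_cast inner_self_eq_norm_sq_to_K (𝕜 := ℂ) (a y)
    rw [hx, inner_smul_left, Complex.conj_ofReal, hinner, ← Complex.ofReal_mul,
      Complex.ofReal_re, hr]
    have hne : ‖a y‖ ≠ 0 := norm_ne_zero_iff.mpr hay
    field_simp
  rw [hval] at hineq
  have h4 : ‖y‖ * ‖a y‖ ≤ c * ‖y‖ ^ 2 := by linarith
  have hny : (0:ℝ) < ‖y‖ := norm_pos_iff.mpr hy
  nlinarith [h4, hny]
end AuxSelfAdj

set_option synthInstance.maxHeartbeats 1000000 in
set_option maxHeartbeats 1600000 in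
theorem norm_sectorial_spectral_radius_bound {n : ℕ} (α : ℝ) (hα0 : 0 ≤ α)
    (hα : α < Real.pi / 2) (T : Matrix (Fin n) (Fin n) ℂ) (hT : IsSectorial α T) :
    (∃ U : Matrix (Fin n) (Fin n) ℂ, U ∈ Matrix.unitaryGroup (Fin n) ℂ ∧
      (‖Matrix.toEuclideanCLM (𝕜 := ℂ) T‖₊ : ENNReal) ≤
        ENNReal.ofReal ((Real.cos α)⁻¹) * spectralRadius ℂ (U * reM T)) ∧
    ‖Matrix.toEuclideanCLM (𝕜 := ℂ) T‖ ≤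
      (Real.cos α)⁻¹ * ‖Matrix.toEuclideanCLM (𝕜 := ℂ) (reM T)‖ := by
  have hcos : 0 < Real.cos α := Real.cos_pos_of_mem_Ioo
    ⟨by linarith [Real.pi_div_two_pos], hα⟩
  have hsec : (0:ℝ) ≤ (Real.cos α)⁻¹ := by positivity
  have htan : 0 ≤ Real.tan α := Real.tan_nonneg_of_nonneg_of_le_pi_div_two hα0 hα.le
  -- the key pointwise numerical-range facts, for all (not nec. unit) vectors
  have key : ∀ x : Fin n → ℂ, 0 ≤ (star x ⬝ᵥ T *ᵥ x).re ∧
      |(star x ⬝ᵥ T *ᵥ x).im| ≤ Real.tan α * (star x ⬝ᵥ T *ᵥ x).re ∧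
      (x ≠ 0 → 0 < (star x ⬝ᵥ T *ᵥ x).re) := by
    intro x
    rcases eq_or_ne x 0 with rfl | hx
    · simp
    · set x' : EuclideanSpace ℂ (Fin n) := (WithLp.equiv 2 _).symm x with hx'
      have hx'0 : x' ≠ 0 := by
        simpa [hx'] using hx
      set r : ℝ := ‖x'‖ with hrdef
      have hr : 0 < r := norm_pos_iff.mpr hx'0
      have hxx : star x ⬝ᵥ x = ((r ^ 2 : ℝ) : ℂ) := by
        have := EuclideanSpace.inner_toLp_toLp (𝕜 := ℂ) x x
        rw [dotProduct_comm] at this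
        have h2 : (inner ℂ (WithLp.toLp 2 x) (WithLp.toLp 2 x) : ℂ)
            = ((‖x'‖ : ℂ)) ^ 2 := inner_self_eq_norm_sq_to_K _
        rw [← this, h2]
        push_cast
        ring
      set u : Fin n → ℂ := ((r : ℂ))⁻¹ • x with hu
      have hrne : r ≠ 0 := hr.ne'
      have hc : ∀ (t : ℝ) (w : ℂ), (((t:ℝ):ℂ) * w).re = t * w.re ∧ (((t:ℝ):ℂ) * w).im = t * w.im := by
        intro t w
        constructor <;>
          simp only [Complex.mul_re, Complex.mul_im, Complex.ofReal_re, Complex.ofReal_im,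
            zero_mul, sub_zero, add_zero, zero_add, mul_zero]
      have hu1 : star u ⬝ᵥ u = 1 := by
        rw [hu, star_smul, smul_dotProduct, dotProduct_smul, hxx]
        simp only [star_inv₀, Complex.star_def, Complex.conj_ofReal, smul_eq_mul]
        rw [← Complex.ofReal_inv, ← Complex.ofReal_mul, ← Complex.ofReal_mul]
        norm_cast
        field_simp
      have hsect := hT u hu1
      obtain ⟨hre, him⟩ := hsect
      have hzu : star u ⬝ᵥ T *ᵥ u = ((r⁻¹ * r⁻¹ : ℝ) : ℂ) * (star x ⬝ᵥ T *ᵥ x) := by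
        rw [hu, star_smul, smul_dotProduct, mulVec_smul, dotProduct_smul]
        simp only [star_inv₀, Complex.star_def, Complex.conj_ofReal, smul_eq_mul]
        rw [← mul_assoc, ← Complex.ofReal_inv, ← Complex.ofReal_mul]
      have hz : star x ⬝ᵥ T *ᵥ x = ((r ^ 2 : ℝ) : ℂ) * (star u ⬝ᵥ T *ᵥ u) := by
        rw [hzu, ← mul_assoc, ← Complex.ofReal_mul,
          show r ^ 2 * (r⁻¹ * r⁻¹) = 1 by field_simp, Complex.ofReal_one, one_mul]
      rw [hz]
      rw [(hc (r ^ 2) (star u ⬝ᵥ T *ᵥ u)).1, (hc (r ^ 2) (star u ⬝ᵥ T *ᵥ u)).2]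
      have hr2 : 0 < r ^ 2 := by positivity
      refine ⟨by nlinarith, ?_, fun _ => by nlinarith⟩
      rw [abs_mul, abs_of_nonneg hr2.le]
      calc r ^ 2 * |(star u ⬝ᵥ T *ᵥ u).im| ≤ r ^ 2 * (Real.tan α * (star u ⬝ᵥ T *ᵥ u).re) :=
            by nlinarith [abs_nonneg (star u ⬝ᵥ T *ᵥ u).im]
        _ = Real.tan α * (r ^ 2 * (star u ⬝ᵥ T *ᵥ u).re) := by ring
  -- the Hermitian part
  set H : Matrix (Fin n) (Fin n) ℂ := reM T with hHdef
  have hHherm : H.IsHermitian := by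
    show Hᴴ = H
    rw [hHdef, reM]
    rw [conjTranspose_smul, conjTranspose_add, conjTranspose_conjTranspose]
    rw [show star (1 / 2 : ℂ) = (1 / 2 : ℂ) by norm_num [Complex.star_def]]
    rw [add_comm]
  have hquadH : ∀ x : Fin n → ℂ, star x ⬝ᵥ H *ᵥ x = (((star x ⬝ᵥ T *ᵥ x).re : ℝ) : ℂ) := by
    intro x
    have hconj : star x ⬝ᵥ Tᴴ *ᵥ x = star (star x ⬝ᵥ T *ᵥ x) := by
      calc star x ⬝ᵥ Tᴴ *ᵥ x = star (star (Tᴴ *ᵥ x) ⬝ᵥ x) := star_dotProduct _ _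
        _ = star ((star x ᵥ* Tᴴᴴ) ⬝ᵥ x) := by rw [star_mulVec]
        _ = star ((star x ᵥ* T) ⬝ᵥ x) := by rw [conjTranspose_conjTranspose]
        _ = star (star x ⬝ᵥ T *ᵥ x) := by rw [dotProduct_mulVec]
    rw [hHdef, reM, smul_mulVec, dotProduct_smul, add_mulVec, dotProduct_add, hconj]
    rw [Complex.star_def, Complex.add_conj]
    rw [smul_eq_mul]
    push_cast
    ring
  have hPSD : H.PosSemidef := by
    refine .of_dotProduct_mulVec_nonneg hHherm fun x => ?_
    rw [hquadH]
    exact Complex.zero_le_real.mpr (key x).1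
  have hPD : H.PosDef := by
    refine .of_dotProduct_mulVec_pos hHherm fun x hx => ?_
    rw [hquadH]
    exact Complex.zero_lt_real.mpr ((key x).2.2 hx)
  -- square root
  open scoped MatrixOrder in
  obtain ⟨R, hRsa, -, hRR'⟩ := CFC.exists_sqrt_of_isSelfAdjoint_of_quasispectrumRestricts
    hPSD.isHermitian (QuasispectrumRestricts.nnreal_of_nonneg hPSD.nonneg)
  have hRherm : Rᴴ = R := hRsa
  have hRR : R * R = H := by simpa using hRR'
  have hdetH : H.det ≠ 0 := hPD.det_pos.ne'
  have hdetR : IsUnit R.det := by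
    rw [isUnit_iff_ne_zero]
    intro h0
    apply hdetH
    rw [← hRR, det_mul, h0, mul_zero]
  set Ri : Matrix (Fin n) (Fin n) ℂ := R⁻¹ with hRidef
  have hRiR : Ri * R = 1 := nonsing_inv_mul R hdetR
  have hRRi : R * Ri = 1 := mul_nonsing_inv R hdetR
  have hRiherm : Riᴴ = Ri := by rw [hRidef, conjTranspose_nonsing_inv, hRherm]
  set S : Matrix (Fin n) (Fin n) ℂ := Ri * T * Ri with hSdef
  have hfact : R * S * R = T := by
    rw [hSdef]
    calc R * (Ri * T * Ri) * R = (R * Ri) * T * (Ri * R) := by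
          simp only [Matrix.mul_assoc]
      _ = T := by rw [hRRi, hRiR, Matrix.one_mul, Matrix.mul_one]
  have hTT : T + Tᴴ = (2:ℂ) • H := by
    rw [hHdef, reM, smul_smul]
    norm_num
  have hRiHRi : Ri * H * Ri = 1 := by
    calc Ri * H * Ri = Ri * (R * R) * Ri := by rw [hRR]
      _ = (Ri * R) * (R * Ri) := by simp only [Matrix.mul_assoc]
      _ = 1 := by rw [hRiR, hRRi, Matrix.one_mul]
  have hSsum : S + Sᴴ = (2:ℂ) • (1 : Matrix (Fin n) (Fin n) ℂ) := by
    have hSH : Sᴴ = Ri * Tᴴ * Ri := by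
      rw [hSdef, conjTranspose_mul, conjTranspose_mul, hRiherm, Matrix.mul_assoc]
    calc S + Sᴴ = Ri * T * Ri + Ri * Tᴴ * Ri := by rw [hSdef, hSH]
      _ = Ri * (T + Tᴴ) * Ri := by noncomm_ring
      _ = Ri * ((2:ℂ) • H) * Ri := by rw [hTT]
      _ = (2:ℂ) • (Ri * H * Ri) := by
          rw [Matrix.mul_smul, Matrix.smul_mul]
      _ = (2:ℂ) • 1 := by rw [hRiHRi]
  -- move to continuous linear maps on Euclidean space
  set φ := Matrix.toEuclideanCLM (𝕜 := ℂ) (n := Fin n) with hφdef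
  set f := φ T with hfdef
  set g := φ H with hgdef
  set ρ := φ R with hρdef
  set ρi := φ Ri with hρidef
  set s := φ S with hsdef
  have hρρi : ρ * ρi = 1 := by rw [hρdef, hρidef, ← _root_.map_mul, hRRi, _root_.map_one]
  have hρiρ : ρi * ρ = 1 := by rw [hρdef, hρidef, ← _root_.map_mul, hRiR, _root_.map_one]
  have hgρρ : g = ρ * ρ := by rw [hgdef, hρdef, ← _root_.map_mul, hRR]
  have hstarρ : star ρ = ρ := by
    rw [hρdef, ← StarHomClass.map_star]
    exact congrArg φ hRherm
  have hstarρi : star ρi = ρi := by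
    rw [hρidef, ← StarHomClass.map_star]
    exact congrArg φ hRiherm
  have hstarg : star g = g := by
    rw [hgdef, ← StarHomClass.map_star]
    exact congrArg φ hHherm
  have hss : s + star s = (2:ℂ) • (1 : EuclideanSpace ℂ (Fin n) →L[ℂ] EuclideanSpace ℂ (Fin n)) := by
    rw [hsdef, ← StarHomClass.map_star, ← _root_.map_add, Matrix.star_eq_conjTranspose, hSsum, _root_.map_smul, _root_.map_one]
  have hfρsρ : f = ρ * s * ρ := by
    rw [hfdef, hρdef, hsdef, ← _root_.map_mul, ← _root_.map_mul, hfact]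
  -- bridge between inner ℂ products and dot products
  have hbr : ∀ (A : Matrix (Fin n) (Fin n) ℂ) (v : EuclideanSpace ℂ (Fin n)),
      (inner ℂ v (φ A v) : ℂ) = star (WithLp.equiv 2 _ v) ⬝ᵥ A *ᵥ (WithLp.equiv 2 _ v) := by
    intro A v
    rw [EuclideanSpace.inner_eq_star_dotProduct, dotProduct_comm]
    rfl
  -- adjoint transfer
  have hadj : ∀ (b : EuclideanSpace ℂ (Fin n) →L[ℂ] EuclideanSpace ℂ (Fin n)), star b = b →
      ∀ u w : EuclideanSpace ℂ (Fin n), (inner ℂ u (b w) : ℂ) = inner ℂ (b u) w := by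
    intro b hb u w
    conv_lhs => rw [← hb]
    rw [ContinuousLinearMap.star_eq_adjoint, ContinuousLinearMap.adjoint_inner_right]
  -- numerical range of s
  have hnum : ∀ y : EuclideanSpace ℂ (Fin n),
      (inner ℂ y (s y) : ℂ).re = ‖y‖ ^ 2 ∧ |(inner ℂ y (s y) : ℂ).im| ≤ Real.tan α * ‖y‖ ^ 2 := by
    intro y
    set x : EuclideanSpace ℂ (Fin n) := ρi y with hxdef
    have hsy : s y = ρi (f (ρi y)) := by
      have : s = ρi * f * ρi := by
        rw [hsdef, hρidef, hfdef, ← _root_.map_mul, ← _root_.map_mul, hSdef]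
      rw [this]
      rfl
    have h1 : (inner ℂ y (s y) : ℂ) = inner ℂ x (f x) := by
      rw [hsy, hadj ρi hstarρi y (f (ρi y)), ← hxdef]
    have hρx : ρ x = y := by
      have : ρ (ρi y) = (ρ * ρi) y := rfl
      rw [hxdef, this, hρρi]
      rfl
    have h3 : (inner ℂ x (g x) : ℂ) = inner ℂ y y := by
      rw [hgρρ]
      have : (ρ * ρ) x = ρ (ρ x) := rfl
      rw [this, hadj ρ hstarρ x (ρ x), hρx]
    set x' : Fin n → ℂ := WithLp.equiv 2 _ x with hx'def
    have e1 : (inner ℂ x (f x) : ℂ) = star x' ⬝ᵥ T *ᵥ x' := hbr T x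
    have e2 : (inner ℂ x (g x) : ℂ) = (((star x' ⬝ᵥ T *ᵥ x').re : ℝ) : ℂ) :=
      (hbr H x).trans (hquadH x')
    have hyy : (inner ℂ y y : ℂ) = ((‖y‖ ^ 2 : ℝ) : ℂ) := by
      exact_mod_cast inner_self_eq_norm_sq_to_K (𝕜 := ℂ) y
    have hre : (star x' ⬝ᵥ T *ᵥ x').re = ‖y‖ ^ 2 := by
      have := e2.symm.trans (h3.trans hyy)
      exact_mod_cast this
    constructor
    · rw [h1, e1, hre]
    · rw [h1, e1, ← hre]
      exact (key x').2.1
  -- the skew part d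
  set d := s - 1 with hddef
  have hstard : star d = -d := by
    have h2 : star s = (2:ℂ) • (1 : EuclideanSpace ℂ (Fin n) →L[ℂ] EuclideanSpace ℂ (Fin n)) - s := by
      rw [← hss]; abel
    rw [hddef, star_sub s 1, star_one, h2]
    module
  have hselfIA : star (Complex.I • d) = Complex.I • d := by
    rw [star_smul, hstard, Complex.star_def, Complex.conj_I]
    module
  have hIdnum : ∀ y : EuclideanSpace ℂ (Fin n),
      |(inner ℂ y ((Complex.I • d) y) : ℂ).re| ≤ Real.tan α * ‖y‖ ^ 2 := by
    intro y
    have h0 : (Complex.I • d) y = Complex.I • (d y) := rfl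
    have h1 : (inner ℂ y ((Complex.I • d) y) : ℂ) = Complex.I * inner ℂ y (d y) := by
      rw [h0, inner_smul_right]
    have h2 : (inner ℂ y (d y) : ℂ) = inner ℂ y (s y) - inner ℂ y y := by
      have : d y = s y - y := by
        rw [hddef]; rfl
      rw [this, inner_sub_right]
    have h3 : (inner ℂ y ((Complex.I • d) y) : ℂ).re = -(inner ℂ y (d y) : ℂ).im := by
      rw [h1]; simp [Complex.mul_re]
    have h4 : (inner ℂ y (d y) : ℂ).im = (inner ℂ y (s y) : ℂ).im := by
      rw [h2, Complex.sub_im]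
      have : (inner ℂ y y : ℂ).im = 0 := by
        have := inner_self_eq_norm_sq_to_K (𝕜 := ℂ) y
        rw [this]
        norm_cast
      rw [this, sub_zero]
    rw [h3, abs_neg, h4]
    exact (hnum y).2
  have hdbound : ∀ y : EuclideanSpace ℂ (Fin n), ‖d y‖ ≤ Real.tan α * ‖y‖ := by
    intro y
    have := selfadj_apply_norm_le (Complex.I • d) hselfIA htan hIdnum y
    have hnorm : ‖(Complex.I • d) y‖ = ‖d y‖ := by
      have h0 : (Complex.I • d) y = Complex.I • (d y) := rfl
      rw [h0, norm_smul, Complex.norm_I, one_mul]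
    rwa [hnorm] at this
  -- re ⟪y, d y⟫ = 0
  have hdperp : ∀ y : EuclideanSpace ℂ (Fin n), (inner ℂ y (d y) : ℂ).re = 0 := by
    intro y
    have h1 : (inner ℂ y ((star d) y) : ℂ) = inner ℂ (d y) y := by
      rw [ContinuousLinearMap.star_eq_adjoint, ContinuousLinearMap.adjoint_inner_right]
    have h2 : (inner ℂ y ((star d) y) : ℂ) = -(inner ℂ y (d y) : ℂ) := by
      rw [hstard]
      have : (-d) y = -(d y) := rfl
      rw [this, inner_neg_right]
    have h3 : (inner ℂ (d y) y : ℂ) = starRingEnd ℂ (inner ℂ y (d y)) := (inner_conj_symm _ _).symm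
    have : starRingEnd ℂ (inner ℂ y (d y) : ℂ) = -(inner ℂ y (d y) : ℂ) := by
      rw [← h3, ← h1, h2]
    have hre := congrArg Complex.re this
    simp only [Complex.conj_re, Complex.neg_re] at hre
    linarith
  -- the norm bound on s
  have h1t : 1 + Real.tan α ^ 2 = ((Real.cos α)⁻¹) ^ 2 := by
    have h := Real.inv_one_add_tan_sq hcos.ne'
    rw [inv_pow, ← h, inv_inv]
  have hsbound : ∀ y : EuclideanSpace ℂ (Fin n), ‖s y‖ ≤ (Real.cos α)⁻¹ * ‖y‖ := by
    intro y
    have hsy : s y = y + d y := by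
      have : s = 1 + d := by rw [hddef]; abel
      rw [this]
      have : (1 + d) y = y + d y := rfl
      rw [this]
    have hnsq : ‖s y‖ ^ 2 = ‖y‖ ^ 2 + ‖d y‖ ^ 2 := by
      rw [hsy, @norm_add_sq ℂ _ _ _ _ y (d y)]
      have : (RCLike.re (inner ℂ y (d y) : ℂ) : ℝ) = 0 := by
        rw [RCLike.re_to_complex]
        exact hdperp y
      rw [this]
      ring
    have hsq : ‖s y‖ ^ 2 ≤ ((Real.cos α)⁻¹ * ‖y‖) ^ 2 := by
      rw [hnsq]
      have hd := hdbound y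
      have : ‖d y‖ ^ 2 ≤ (Real.tan α * ‖y‖) ^ 2 := by
        nlinarith [norm_nonneg (d y)]
      calc ‖y‖ ^ 2 + ‖d y‖ ^ 2 ≤ ‖y‖ ^ 2 + (Real.tan α * ‖y‖) ^ 2 := by linarith
        _ = (1 + Real.tan α ^ 2) * ‖y‖ ^ 2 := by ring
        _ = ((Real.cos α)⁻¹) ^ 2 * ‖y‖ ^ 2 := by rw [h1t]
        _ = ((Real.cos α)⁻¹ * ‖y‖) ^ 2 := by ring
    calc ‖s y‖ = Real.sqrt (‖s y‖ ^ 2) := (Real.sqrt_sq (norm_nonneg _)).symm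
      _ ≤ Real.sqrt (((Real.cos α)⁻¹ * ‖y‖) ^ 2) := Real.sqrt_le_sqrt hsq
      _ = (Real.cos α)⁻¹ * ‖y‖ := Real.sqrt_sq (by positivity)
  have hsnorm : ‖s‖ ≤ (Real.cos α)⁻¹ := ContinuousLinearMap.opNorm_le_bound _ hsec hsbound
  -- norm of ρ squared equals norm of g
  have hρg : ‖ρ‖ * ‖ρ‖ = ‖g‖ := by
    rw [← CStarRing.norm_star_mul_self (x := ρ), hstarρ, ← hgρρ]
  -- the main norm inequality
  have hmain : ‖f‖ ≤ (Real.cos α)⁻¹ * ‖g‖ := by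
    calc ‖f‖ = ‖ρ * s * ρ‖ := by rw [hfρsρ]
      _ ≤ ‖ρ * s‖ * ‖ρ‖ := norm_mul_le _ _
      _ ≤ ‖ρ‖ * ‖s‖ * ‖ρ‖ := by
          have := norm_mul_le ρ s
          have hρ0 : (0:ℝ) ≤ ‖ρ‖ := norm_nonneg _
          nlinarith [norm_nonneg (ρ * s), norm_nonneg ρ, norm_nonneg s]
      _ ≤ ‖ρ‖ * (Real.cos α)⁻¹ * ‖ρ‖ := by
          have hρ0 : (0:ℝ) ≤ ‖ρ‖ := norm_nonneg _
          nlinarith [norm_nonneg s]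
      _ = (Real.cos α)⁻¹ * (‖ρ‖ * ‖ρ‖) := by ring
      _ = (Real.cos α)⁻¹ * ‖g‖ := by rw [hρg]
  refine ⟨⟨1, ?_, ?_⟩, hmain⟩
  · exact one_mem _
  · rw [one_mul]
    have hspec : spectralRadius ℂ (reM T) = spectralRadius ℂ g := by
      unfold spectralRadius
      rw [hgdef, hφdef, AlgEquiv.spectrum_eq]
    have hgsa : IsSelfAdjoint g := hstarg
    rw [hspec, hgsa.spectralRadius_eq_nnnorm]
    rw [← enorm_eq_nnnorm, ← enorm_eq_nnnorm, ← ofReal_norm, ← ofReal_norm,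
      ← ENNReal.ofReal_mul hsec]
    exact ENNReal.ofReal_le_ofReal hmain
end
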